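/- arXiv:math/0506314 — 5 statements merged into one kernel-verified Lean document; each statement's English description precedes it below -/
import Mathlib

section
/- If J is an abelian complex structure on a real Lie algebra g, then each term g_ℓ of the ascending central series of g is J-invariant: J(g_ℓ) ⊆ g_ℓ for all ℓ ≥ 0. -/
/-! Since `J² = -1`, the abelian condition gives `⁅J X, Y⁆ = ⁅J X, J (-J Y)⁆ = ⁅X, -J Y⁆`, so
`ad (J X)` and `ad X` have the same image. Hence `{X : ⁅X, g⁆ ⊆ S}` is `J`-invariant for every
`S`, whatever `S` is, and `g_0 = 0` is trivially invariant. -/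

section AbelianComplexStructure

variable {L F : Type*} [LieRing L] [FunLike F L L] [AddMonoidHomClass F L L] {J : F}

theorem lie_apply_left_eq_lie_neg_apply_right (hJ2 : ∀ X : L, J (J X) = -X)
    (hab : ∀ A B : L, ⁅J A, J B⁆ = ⁅A, B⁆) (X Y : L) : ⁅J X, Y⁆ = ⁅X, -J Y⁆ := by
  rw [← hab X (-J Y), map_neg, hJ2, neg_neg]

theorem forall_lie_apply_mem_of_forall_lie_mem (hJ2 : ∀ X : L, J (J X) = -X)
    (hab : ∀ A B : L, ⁅J A, J B⁆ = ⁅A, B⁆) {S : Set L} {X : L} (hX : ∀ Y, ⁅X, Y⁆ ∈ S) :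
    ∀ Y, ⁅J X, Y⁆ ∈ S := fun Y => by
  rw [lie_apply_left_eq_lie_neg_apply_right hJ2 hab]
  exact hX _

end AbelianComplexStructure

theorem ascending_series_J_invariant_general
    {g : Type*} [LieRing g] [LieAlgebra ℝ g]
    (J : g →ₗ[ℝ] g) (hJ2 : ∀ X : g, J (J X) = -X)
    (hab : ∀ A B : g, ⁅J A, J B⁆ = ⁅A, B⁆)
    (gs : ℕ → Submodule ℝ g) (h0 : gs 0 = ⊥)
    (hsucc : ∀ (ℓ : ℕ) (X : g), X ∈ gs (ℓ + 1) ↔ ∀ Y : g, ⁅X, Y⁆ ∈ gs ℓ) :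
    ∀ (ℓ : ℕ) (X : g), X ∈ gs ℓ → J X ∈ gs ℓ := by
  rintro (_ | ℓ) X hX
  · rw [h0, Submodule.mem_bot] at hX ⊢
    rw [hX, map_zero]
  · rw [hsucc] at hX ⊢
    exact forall_lie_apply_mem_of_forall_lie_mem hJ2 hab hX

/-- If `J` is an abelian complex structure on a real Lie algebra `g`, then each
term of the ascending central series `g_0 = 0`, `g_{ℓ+1} = {X : ⁅X, g⁆ ⊆ g_ℓ}`
is `J`-invariant. -/
theorem ascending_series_J_invariant
    {g : Type*} [LieRing g] [LieAlgebra ℝ g] [FiniteDimensional ℝ g]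
    (J : g →ₗ[ℝ] g) (hJ2 : ∀ X : g, J (J X) = -X)
    (hab : ∀ A B : g, ⁅J A, J B⁆ = ⁅A, B⁆)
    (gs : ℕ → Submodule ℝ g) (h0 : gs 0 = ⊥)
    (hsucc : ∀ (ℓ : ℕ) (X : g), X ∈ gs (ℓ + 1) ↔ ∀ Y : g, ⁅X, Y⁆ ∈ gs ℓ) :
    ∀ (ℓ : ℕ) (X : g), X ∈ gs ℓ → J X ∈ gs ℓ :=
  ascending_series_J_invariant_general J hJ2 hab gs h0 hsucc
end

section
/- Let g be a real Lie algebra with complex structure J, and suppose J is abelian. For V a (1,0)-vector and U̅ a (0,1)-vector in the complexification of g, define ∂̄_{U̅} V as the (1,0)-component of [U̅, V]. Then the map ∂̄ : g^{1,0} → Hom(g^{0,1}, g^{1,0}) extended to forms by ∂̄(ω̄ ⊗ V) = (-1)^k ω̄ ∧ ∂̄V on g^{*(0,k)} ⊗ g^{1,0} satisfies ∂̄ ∘ ∂̄ = 0. -/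
/-!
On the complexification, `Jᶜ` still satisfies `⁅Jᶜ A, Jᶜ B⁆ = ⁅A, B⁆`, so for two `(-i)`-eigenvectors
`⁅A, B⁆ = (-i)² ⁅A, B⁆` and `g^{0,1}` is abelian. Since `Y - P^{1,0} Y` lies in `g^{0,1}`, the
projection can be dropped inside a bracket with a (0,1)-vector, and `∂̄_Ū ∂̄_W̄ V = ∂̄_W̄ ∂̄_Ū V`
becomes `⁅Ū, ⁅W̄, V⁆⁆ = ⁅W̄, ⁅Ū, V⁆⁆`, which is the Jacobi identity together with `⁅Ū, W̄⁆ = 0`.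
-/

open TensorProduct

namespace LinearMap

variable {R A : Type*} [CommRing R] [CommRing A] [Algebra R A]

theorem baseChange_apply_baseChange_apply_eq_neg {M : Type*} [AddCommGroup M] [Module R M]
    {J : M →ₗ[R] M} (hJ : ∀ x, J (J x) = -x) (x : A ⊗[R] M) :
    J.baseChange A (J.baseChange A x) = -x := by
  have hJJ : J ∘ₗ J = -LinearMap.id := ext hJ
  rw [← comp_apply, ← baseChange_comp, hJJ, baseChange_neg, baseChange_id, neg_apply, id_apply]

theorem lie_baseChange_apply_baseChange_apply {L : Type*} [LieRing L] [LieAlgebra R L]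
    {J : L →ₗ[R] L} (hJ : ∀ x y : L, ⁅J x, J y⁆ = ⁅x, y⁆) (x y : A ⊗[R] L) :
    ⁅J.baseChange A x, J.baseChange A y⁆ = ⁅x, y⁆ := by
  induction x using TensorProduct.induction_on with
  | zero => simp only [map_zero, zero_lie]
  | add x₁ x₂ h₁ h₂ => rw [map_add, add_lie, add_lie, h₁, h₂]
  | tmul a x =>
    induction y using TensorProduct.induction_on with
    | zero => simp only [map_zero, lie_zero]
    | add y₁ y₂ h₁ h₂ => rw [map_add, lie_add, lie_add, h₁, h₂]
    | tmul b y =>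
      simp only [baseChange_tmul, LieAlgebra.ExtendScalars.bracket_tmul, hJ]

end LinearMap

theorem lie_eq_zero_of_apply_eq_smul {K L : Type*} [Field K] [LieRing L] [LieAlgebra K L]
    {f : L →ₗ[K] L} (hf : ∀ x y : L, ⁅f x, f y⁆ = ⁅x, y⁆) {c : K} (hc : c * c ≠ 1)
    {x y : L} (hx : f x = c • x) (hy : f y = c • y) : ⁅x, y⁆ = 0 := by
  have h := hf x y
  rw [hx, hy, smul_lie, lie_smul, smul_smul] at h
  have h' : (c * c - 1) • ⁅x, y⁆ = 0 := by rw [sub_smul, one_smul, h, sub_self]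
  exact (smul_eq_zero.mp h').resolve_left (sub_ne_zero.mpr hc)

section ComplexStructure

variable {L : Type*}

/-- `P^{1,0}`: the projection onto the `i`-eigenspace of `J` when `J² = -1`. -/
noncomputable def proj10 [AddCommGroup L] [Module ℂ L] (J : L →ₗ[ℂ] L) : L →ₗ[ℂ] L :=
  (2⁻¹ : ℂ) • (LinearMap.id - Complex.I • J)

theorem apply_sub_proj10_apply [AddCommGroup L] [Module ℂ L] {J : L →ₗ[ℂ] L}
    (hJ : ∀ x, J (J x) = -x) (y : L) :
    J (y - proj10 J y) = -(Complex.I • (y - proj10 J y)) := by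
  simp only [proj10, LinearMap.smul_apply, LinearMap.sub_apply, LinearMap.id_apply, map_sub,
    map_smul, hJ]
  match_scalars
  · linear_combination (2⁻¹ : ℂ) * Complex.I_sq
  · ring

variable [LieRing L] [LieAlgebra ℂ L] {J : L →ₗ[ℂ] L}

theorem lie_eq_zero_of_apply_eq_neg_I_smul (hJ : ∀ x y : L, ⁅J x, J y⁆ = ⁅x, y⁆) {x y : L}
    (hx : J x = -(Complex.I • x)) (hy : J y = -(Complex.I • y)) : ⁅x, y⁆ = 0 := by
  rw [← neg_smul] at hx hy
  refine lie_eq_zero_of_apply_eq_smul hJ ?_ hx hy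
  rw [neg_mul_neg, Complex.I_mul_I]
  norm_num

theorem lie_proj10_apply_of_apply_eq_neg_I_smul (hJ : ∀ x y : L, ⁅J x, J y⁆ = ⁅x, y⁆)
    (hJ2 : ∀ x, J (J x) = -x) {x : L} (hx : J x = -(Complex.I • x)) (y : L) :
    ⁅x, proj10 J y⁆ = ⁅x, y⁆ := by
  have h := lie_eq_zero_of_apply_eq_neg_I_smul hJ hx (apply_sub_proj10_apply hJ2 y)
  rwa [lie_sub, sub_eq_zero, eq_comm] at h

end ComplexStructure

theorem dbar_squared_zero_general
    {g : Type*} [LieRing g] [LieAlgebra ℝ g]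
    (J : g →ₗ[ℝ] g) (hJ2 : ∀ X : g, J (J X) = -X)
    (hab : ∀ A B : g, ⁅J A, J B⁆ = ⁅A, B⁆) :
    ∀ (Jc : (ℂ ⊗[ℝ] g) →ₗ[ℂ] (ℂ ⊗[ℝ] g)), Jc = J.baseChange ℂ →
    ∀ (P10 : (ℂ ⊗[ℝ] g) →ₗ[ℂ] (ℂ ⊗[ℝ] g)),
      P10 = (2⁻¹ : ℂ) • (LinearMap.id - Complex.I • Jc) →
    ∀ V U W : ℂ ⊗[ℝ] g,
      Jc V = Complex.I • V →
      Jc U = -(Complex.I • U) → Jc W = -(Complex.I • W) →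
      P10 ⁅U, P10 ⁅W, V⁆⁆ = P10 ⁅W, P10 ⁅U, V⁆⁆ := by
  rintro Jc rfl P10 hP10 V U W - hU hW
  obtain rfl : P10 = proj10 (J.baseChange ℂ) := hP10
  have habC := LinearMap.lie_baseChange_apply_baseChange_apply (A := ℂ) hab
  have hJ2C := LinearMap.baseChange_apply_baseChange_apply_eq_neg (A := ℂ) hJ2
  have hUW : ⁅U, W⁆ = 0 := lie_eq_zero_of_apply_eq_neg_I_smul habC hU hW
  rw [lie_proj10_apply_of_apply_eq_neg_I_smul habC hJ2C hU,
    lie_proj10_apply_of_apply_eq_neg_I_smul habC hJ2C hW, leibniz_lie, hUW, zero_lie, zero_add]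

/-- For an abelian complex structure `J` on a real Lie algebra `g`, the
operator `∂̄` defined on (1,0)-vectors by `∂̄_{Ū} V = ⁅Ū, V⁆^{1,0}` and
extended to `g^{*(0,k)} ⊗ g^{1,0}` by `∂̄(ω̄ ⊗ V) = (-1)ᵏ ω̄ ∧ ∂̄V`
satisfies `∂̄ ∘ ∂̄ = 0`.  Since the forms `ω̄` are not differentiated, the
condition `∂̄ ∘ ∂̄ = 0` in every degree is equivalent to its degree-zero
instance: `∂̄_{Ū}(∂̄_{W̄} V) = ∂̄_{W̄}(∂̄_{Ū} V)` for all
(0,1)-vectors `Ū, W̄` and (1,0)-vectors `V`, where the (1,0)-projection is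
`P^{1,0} = (1/2)(id - i Jᶜ)`. -/
theorem dbar_squared_zero
    {g : Type*} [LieRing g] [LieAlgebra ℝ g] [FiniteDimensional ℝ g]
    (J : g →ₗ[ℝ] g) (hJ2 : ∀ X : g, J (J X) = -X)
    (hab : ∀ A B : g, ⁅J A, J B⁆ = ⁅A, B⁆) :
    ∀ (Jc : (ℂ ⊗[ℝ] g) →ₗ[ℂ] (ℂ ⊗[ℝ] g)), Jc = J.baseChange ℂ →
    ∀ (P10 : (ℂ ⊗[ℝ] g) →ₗ[ℂ] (ℂ ⊗[ℝ] g)),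
      P10 = (2⁻¹ : ℂ) • (LinearMap.id - Complex.I • Jc) →
    ∀ V U W : ℂ ⊗[ℝ] g,
      Jc V = Complex.I • V →
      Jc U = -(Complex.I • U) → Jc W = -(Complex.I • W) →
      P10 ⁅U, P10 ⁅W, V⁆⁆ = P10 ⁅W, P10 ⁅U, V⁆⁆ :=
  dbar_squared_zero_general J hJ2 hab
end

section
/- Let g be a 2n-dimensional real nilpotent Lie algebra with a nilpotent complex structure J, and suppose the center of g has real dimension 2. Then the center of g equals g_1^J and in particular is J-invariant. -/
/-!
`g₁ᴶ` consists of the central elements whose `J`-image is central too, so it is a `J`-invariant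
subspace of the center. It is nonzero, since otherwise the whole series `gℓᴶ` would vanish and
could not reach `g`; and a nonzero `J`-invariant real subspace has dimension at least 2, because
`X` and `J X` are independent when `J² = -1`. As the center has dimension 2, `g₁ᴶ` is all of it.
-/

section

variable {K V : Type*} [Field K] [LinearOrder K] [IsStrictOrderedRing K] [AddCommGroup V]
  [Module K V] (J : V →ₗ[K] V) (hJ2 : ∀ X : V, J (J X) = -X)
include hJ2

theorem linearIndependent_pair_apply_of_apply_apply_eq_neg {X : V} (hX : X ≠ 0) :
    LinearIndependent K ![X, J X] := by
  rw [LinearIndependent.pair_iff' hX]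
  intro a ha
  have hsq : (a ^ 2 + 1) • X = 0 := by
    have h := hJ2 X
    rw [← ha, map_smul, ← ha, smul_smul, ← sq] at h
    rw [add_smul, one_smul, h, neg_add_cancel]
  exact hX ((smul_eq_zero.1 hsq).resolve_left (by positivity))

theorem two_le_finrank_of_forall_apply_mem (W : Submodule K V) [FiniteDimensional K W]
    (hW : W ≠ ⊥) (hJW : ∀ X ∈ W, J X ∈ W) : 2 ≤ Module.finrank K W := by
  obtain ⟨X, hXW, hX⟩ := W.ne_bot_iff.1 hW
  have hspan : Submodule.span K (Set.range ![X, J X]) ≤ W := by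
    rw [Submodule.span_le, Set.range_subset_iff, Fin.forall_fin_two]
    exact ⟨hXW, hJW X hXW⟩
  calc 2 = Module.finrank K (Submodule.span K (Set.range ![X, J X])) := by
        rw [finrank_span_eq_card (linearIndependent_pair_apply_of_apply_apply_eq_neg J hJ2 hX),
          Fintype.card_fin]
    _ ≤ Module.finrank K W := Submodule.finrank_mono hspan

end

section

variable {R L : Type*} [CommRing R] [LieRing L] [LieAlgebra R L] (J : L →ₗ[R] L)
  (gJ : ℕ → Submodule R L) (h0 : gJ 0 = ⊥)
  (hsucc : ∀ (ℓ : ℕ) (X : L), X ∈ gJ (ℓ + 1) ↔ ∀ Y : L, ⁅X, Y⁆ ∈ gJ ℓ ∧ ⁅J X, Y⁆ ∈ gJ ℓ)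
include h0 hsucc

theorem mem_gJ_one_iff (X : L) : X ∈ gJ 1 ↔ ∀ Y : L, ⁅X, Y⁆ = 0 ∧ ⁅J X, Y⁆ = 0 := by
  simp only [hsucc 0 X, h0, Submodule.mem_bot]

theorem gJ_one_le_center : gJ 1 ≤ (LieAlgebra.center R L).toSubmodule := fun X hX Y =>
  by rw [← lie_skew, ((mem_gJ_one_iff J gJ h0 hsucc X).1 hX Y).1, neg_zero]

theorem apply_mem_gJ_one (hJ2 : ∀ X : L, J (J X) = -X) {X : L} (hX : X ∈ gJ 1) :
    J X ∈ gJ 1 := by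
  rw [mem_gJ_one_iff J gJ h0 hsucc] at hX ⊢
  exact fun Y => ⟨(hX Y).2, by rw [hJ2, neg_lie, (hX Y).1, neg_zero]⟩

theorem gJ_eq_bot_of_gJ_one_eq_bot (h1 : gJ 1 = ⊥) (ℓ : ℕ) : gJ ℓ = ⊥ := by
  induction ℓ with
  | zero => exact h0
  | succ n ih =>
    ext X
    rw [hsucc n X, ih, ← h0, ← hsucc 0 X, h1, h0]

end

theorem center_eq_gJ_one_of_nilpotent_general
    {g : Type*} [LieRing g] [LieAlgebra ℝ g]
    (J : g →ₗ[ℝ] g) (hJ2 : ∀ X : g, J (J X) = -X)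
    (gJ : ℕ → Submodule ℝ g) (h0 : gJ 0 = ⊥)
    (hsucc : ∀ (ℓ : ℕ) (X : g),
      X ∈ gJ (ℓ + 1) ↔ ∀ Y : g, ⁅X, Y⁆ ∈ gJ ℓ ∧ ⁅J X, Y⁆ ∈ gJ ℓ)
    (hnilp : ∃ k, gJ k = ⊤)
    (hcenter : Module.finrank ℝ (LieAlgebra.center ℝ g) = 2) :
    (∀ X : g, X ∈ LieAlgebra.center ℝ g ↔ X ∈ gJ 1) ∧
    (∀ X ∈ LieAlgebra.center ℝ g, J X ∈ LieAlgebra.center ℝ g) := by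
  have hle := gJ_one_le_center J gJ h0 hsucc
  have : FiniteDimensional ℝ (LieAlgebra.center ℝ g) := Module.finite_of_finrank_pos (by omega)
  have : FiniteDimensional ℝ (gJ 1) := Submodule.finiteDimensional_of_le hle
  have hne : gJ 1 ≠ ⊥ := by
    intro h1
    obtain ⟨k, hk⟩ := hnilp
    obtain ⟨Z, hZ⟩ := Module.finrank_pos_iff_exists_ne_zero.1
      (by omega : 0 < Module.finrank ℝ (LieAlgebra.center ℝ g))
    have hZk : (Z : g) ∈ gJ k := hk ▸ Submodule.mem_top
    rw [gJ_eq_bot_of_gJ_one_eq_bot J gJ h0 hsucc h1, Submodule.mem_bot] at hZk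
    exact hZ (Subtype.ext hZk)
  have heq : gJ 1 = (LieAlgebra.center ℝ g).toSubmodule :=
    Submodule.eq_of_le_of_finrank_le hle
      (hcenter.trans_le (two_le_finrank_of_forall_apply_mem J hJ2 _ hne
        fun _ => apply_mem_gJ_one J gJ h0 hsucc hJ2))
  have hmem : ∀ X : g, X ∈ LieAlgebra.center ℝ g ↔ X ∈ gJ 1 := fun X => by
    rw [heq, LieSubmodule.mem_toSubmodule]
  exact ⟨hmem, fun X hX => (hmem _).2 (apply_mem_gJ_one J gJ h0 hsucc hJ2 ((hmem X).1 hX))⟩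

/-- If `J` is a nilpotent complex structure on a real nilpotent Lie algebra `g`
whose center has real dimension 2, then the center equals `g₁ᴶ`; in particular
the center is `J`-invariant. -/
theorem center_eq_gJ_one_of_nilpotent
    {g : Type*} [LieRing g] [LieAlgebra ℝ g] [FiniteDimensional ℝ g]
    [LieRing.IsNilpotent g]
    (J : g →ₗ[ℝ] g) (hJ2 : ∀ X : g, J (J X) = -X)
    (gJ : ℕ → Submodule ℝ g) (h0 : gJ 0 = ⊥)
    (hsucc : ∀ (ℓ : ℕ) (X : g),
      X ∈ gJ (ℓ + 1) ↔ ∀ Y : g, ⁅X, Y⁆ ∈ gJ ℓ ∧ ⁅J X, Y⁆ ∈ gJ ℓ)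
    (hnilp : ∃ k, gJ k = ⊤)
    (hcenter : Module.finrank ℝ (LieAlgebra.center ℝ g) = 2) :
    (∀ X : g, X ∈ LieAlgebra.center ℝ g ↔ X ∈ gJ 1) ∧
    (∀ X ∈ LieAlgebra.center ℝ g, J X ∈ LieAlgebra.center ℝ g) :=
  center_eq_gJ_one_of_nilpotent_general J hJ2 gJ h0 hsucc hnilp hcenter
end

section
/- Let g be a real Lie algebra with complex structure J such that every 1-form of type (1,0) has differential of type (1,1) (i.e., dω vanishes on pairs of (1,0)-vectors and on pairs of (0,1)-vectors). Then J is abelian: [JA, JB] = [A, B] for all A, B ∈ g. -/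
/-!
For real `A`, the vectors `1 ⊗ A - i ⊗ J A` and `1 ⊗ A + i ⊗ J A` are of type (1,0) and (0,1),
and the sum of the brackets of two such pairs is `2 ⊗ (⁅A, B⁆ - ⁅J A, J B⁆)`, a real vector.
The hypothesis says that the bracket of two vectors of the same type is annihilated by every
(1,0)-form, i.e. lies in `g^{0,1}`. A real vector in `g^{0,1}` is zero, since `J` has no real
eigenvalues.
-/

open TensorProduct Complex

section DualCharacterization

variable {V : Type*} [AddCommGroup V] [Module ℂ V]

/-- Test against the forms `f ∘ (1 - i T)`, which vanish on the `-i`-eigenspace. -/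
theorem mem_eigenspace_neg_I_of_forall_dual {T : V →ₗ[ℂ] V} (hT : ∀ v, T (T v) = -v) {v : V}
    (hv : ∀ ω : V →ₗ[ℂ] ℂ, (∀ u, T u = -(I • u) → ω u = 0) → ω v = 0) :
    v ∈ Module.End.eigenspace T (-I) := by
  rw [Module.End.mem_eigenspace_iff, neg_smul]
  have hproj : ∀ u, T u = -(I • u) → u - I • T u = 0 := fun u hu => by
    rw [hu, smul_neg, smul_smul, I_mul_I, neg_one_smul, neg_neg, sub_self]
  have hv' : v = I • T v := sub_eq_zero.mp <| (Module.forall_dual_apply_eq_zero_iff ℂ _).mp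
    fun f => hv (f ∘ₗ (LinearMap.id - I • T)) fun u hu => by simp [hproj u hu]
  calc T v = T (I • T v) := by rw [← hv']
    _ = -(I • v) := by rw [map_smul, hT, smul_neg]

end DualCharacterization

section BaseChange

variable {M : Type*} [AddCommGroup M] [Module ℝ M]

theorem baseChange_baseChange_of_sq_eq_neg {J : M →ₗ[ℝ] M} (hJ2 : ∀ X, J (J X) = -X)
    (v : ℂ ⊗[ℝ] M) : J.baseChange ℂ (J.baseChange ℂ v) = -v := by
  have hJJ : J ∘ₗ J = -LinearMap.id := LinearMap.ext fun X => by simp [hJ2]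
  rw [← LinearMap.comp_apply, ← LinearMap.baseChange_comp, hJJ, LinearMap.baseChange_neg,
    LinearMap.baseChange_id]
  rfl

theorem baseChange_one_tmul_add_tmul {J : M →ₗ[ℝ] M} (hJ2 : ∀ X, J (J X) = -X) {c : ℂ}
    (hc : c * c = -1) (C : M) :
    J.baseChange ℂ (1 ⊗ₜ C + c ⊗ₜ J C) = -c • (1 ⊗ₜ C + c ⊗ₜ J C) := by
  rw [smul_add, smul_tmul', smul_tmul', smul_eq_mul, smul_eq_mul, mul_one, neg_mul, hc, neg_neg,
    map_add, LinearMap.baseChange_tmul, LinearMap.baseChange_tmul, hJ2, tmul_neg, neg_tmul]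
  abel

theorem eq_zero_of_one_tmul_mem_eigenspace_neg_I {J : M →ₗ[ℝ] M}
    (hJ2 : ∀ X, J (J X) = -X) {z : M}
    (hz : (1 : ℂ) ⊗ₜ[ℝ] z ∈ Module.End.eigenspace (J.baseChange ℂ) (-I)) : z = 0 := by
  let re : ℂ ⊗[ℝ] M →ₗ[ℝ] M := (TensorProduct.lid ℝ M).toLinearMap ∘ₗ reLm.rTensor M
  have hre : ∀ (c : ℂ) (x : M), re (c ⊗ₜ x) = c.re • x := fun c x => by simp [re]
  have hJz : J z = 0 := by
    simpa [smul_tmul', hre] using congrArg re (Module.End.mem_eigenspace_iff.mp hz)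
  calc z = -J (J z) := by rw [hJ2, neg_neg]
    _ = 0 := by rw [hJz, map_zero, neg_zero]

end BaseChange

theorem lie_tmul_add_lie_neg_tmul {g : Type*} [LieRing g] [LieAlgebra ℝ g] (c : ℂ)
    (A A' B B' : g) :
    ⁅(1 : ℂ) ⊗ₜ[ℝ] A + c ⊗ₜ[ℝ] A', (1 : ℂ) ⊗ₜ[ℝ] B + c ⊗ₜ[ℝ] B'⁆ +
        ⁅(1 : ℂ) ⊗ₜ[ℝ] A + (-c) ⊗ₜ[ℝ] A', (1 : ℂ) ⊗ₜ[ℝ] B + (-c) ⊗ₜ[ℝ] B'⁆ =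
      (2 : ℂ) • ((1 : ℂ) ⊗ₜ[ℝ] ⁅A, B⁆ + (c * c) ⊗ₜ[ℝ] ⁅A', B'⁆) := by
  simp only [neg_tmul, lie_add, add_lie, lie_neg, neg_lie, neg_neg,
    LieAlgebra.ExtendScalars.bracket_tmul, one_mul, mul_one, two_smul]
  abel

theorem abelian_of_d_oneZero_type_one_one_general
    {g : Type*} [LieRing g] [LieAlgebra ℝ g]
    (J : g →ₗ[ℝ] g) (hJ2 : ∀ X : g, J (J X) = -X)
    (Jc : (ℂ ⊗[ℝ] g) →ₗ[ℂ] (ℂ ⊗[ℝ] g)) (hJc : Jc = J.baseChange ℂ)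
    (h : ∀ ω : (ℂ ⊗[ℝ] g) →ₗ[ℂ] ℂ,
      (∀ v : ℂ ⊗[ℝ] g, Jc v = -(Complex.I • v) → ω v = 0) →
      ∀ X Y : ℂ ⊗[ℝ] g,
        ((Jc X = Complex.I • X ∧ Jc Y = Complex.I • Y) ∨
         (Jc X = -(Complex.I • X) ∧ Jc Y = -(Complex.I • Y))) →
        -ω ⁅X, Y⁆ = 0) :
    ∀ A B : g, ⁅J A, J B⁆ = ⁅A, B⁆ := by
  subst hJc
  intro A B
  let E := Module.End.eigenspace (J.baseChange ℂ) (-I)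
  have hbracket : ∀ X Y : ℂ ⊗[ℝ] g,
      ((J.baseChange ℂ X = I • X ∧ J.baseChange ℂ Y = I • Y) ∨
       (J.baseChange ℂ X = -(I • X) ∧ J.baseChange ℂ Y = -(I • Y))) → ⁅X, Y⁆ ∈ E :=
    fun X Y hXY => mem_eigenspace_neg_I_of_forall_dual (baseChange_baseChange_of_sq_eq_neg hJ2)
      fun ω hω => neg_eq_zero.mp (h ω hω X Y hXY)
  have h01 : ∀ C, J.baseChange ℂ (1 ⊗ₜ C + I ⊗ₜ J C) = -(I • (1 ⊗ₜ C + I ⊗ₜ J C)) := fun C => by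
    rw [baseChange_one_tmul_add_tmul hJ2 I_mul_I, neg_smul]
  have h10 : ∀ C, J.baseChange ℂ (1 ⊗ₜ C + (-I) ⊗ₜ J C) = I • (1 ⊗ₜ C + (-I) ⊗ₜ J C) := fun C => by
    rw [baseChange_one_tmul_add_tmul hJ2 (by rw [neg_mul_neg, I_mul_I]), neg_neg]
  have hsum : (2 : ℂ) • (1 ⊗ₜ ⁅A, B⁆ + (I * I) ⊗ₜ ⁅J A, J B⁆) ∈ E := by
    rw [← lie_tmul_add_lie_neg_tmul]
    exact add_mem (hbracket _ _ (Or.inr ⟨h01 A, h01 B⟩)) (hbracket _ _ (Or.inl ⟨h10 A, h10 B⟩))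
  have hreal : (1 : ℂ) ⊗ₜ[ℝ] (⁅A, B⁆ - ⁅J A, J B⁆) ∈ E := by
    rwa [Submodule.smul_mem_iff _ two_ne_zero, I_mul_I, neg_tmul, ← sub_eq_add_neg,
      ← tmul_sub] at hsum
  exact (sub_eq_zero.mp (eq_zero_of_one_tmul_mem_eigenspace_neg_I hJ2 hreal)).symm

/-- If every (1,0)-form on `g_ℂ` has differential of type (1,1) (it vanishes
on pairs of (1,0)-vectors and on pairs of (0,1)-vectors), then the complex
structure `J` is abelian: `⁅J A, J B⁆ = ⁅A, B⁆`. -/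
theorem abelian_of_d_oneZero_type_one_one
    {g : Type*} [LieRing g] [LieAlgebra ℝ g] [FiniteDimensional ℝ g]
    (J : g →ₗ[ℝ] g) (hJ2 : ∀ X : g, J (J X) = -X)
    (Jc : (ℂ ⊗[ℝ] g) →ₗ[ℂ] (ℂ ⊗[ℝ] g)) (hJc : Jc = J.baseChange ℂ)
    (h : ∀ ω : (ℂ ⊗[ℝ] g) →ₗ[ℂ] ℂ,
      (∀ v : ℂ ⊗[ℝ] g, Jc v = -(Complex.I • v) → ω v = 0) →
      ∀ X Y : ℂ ⊗[ℝ] g,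
        ((Jc X = Complex.I • X ∧ Jc Y = Complex.I • Y) ∨
         (Jc X = -(Complex.I • X) ∧ Jc Y = -(Complex.I • Y))) →
        -ω ⁅X, Y⁆ = 0) :
    ∀ A B : g, ⁅J A, J B⁆ = ⁅A, B⁆ :=
  abelian_of_d_oneZero_type_one_one_general J hJ2 Jc hJc h
end

section
/- Let g be a real Lie algebra with abelian complex structure J. Equip the direct sum g^{1,0} ⊕ (g^{0,1})* with the bracket for which {g^{1,0}, g^{1,0}} = 0, {(g^{0,1})*, (g^{0,1})*} = 0, and {V, ω̄} = ι_V dω̄ for V ∈ g^{1,0}, ω̄ ∈ (g^{0,1})* (note ι_V dω̄ lies in (g^{0,1})* since d of a (0,1)-form has no (0,2)-part). Then this bracket makes g^{1,0} ⊕ (g^{0,1})* a Lie algebra. -/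
/-!
Complexifying `⁅J A, J B⁆ = ⁅A, B⁆`, two `i`-eigenvectors `V, W` of `J` satisfy
`⁅V, W⁆ = (i * i) • ⁅V, W⁆ = -⁅V, W⁆`, so `g^{1,0}` is abelian. Hence for `V ∈ g^{1,0}` the
coadjoint operator `ω ↦ ⁅V, ω⁆ = -ω ∘ ad V` maps every functional into the annihilator of
`g^{1,0}`, and these operators commute by the Jacobi identity. The bracket is then the
semidirect product of the abelian Lie algebra `g^{1,0}` with this module.
-/

open TensorProduct

theorem LinearMap.baseChange_lie_baseChange {R A L : Type*} [CommRing R] [CommRing A]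
    [Algebra R A] [LieRing L] [LieAlgebra R L] (J : L →ₗ[R] L)
    (hJ : ∀ x y : L, ⁅J x, J y⁆ = ⁅x, y⁆) (x y : A ⊗[R] L) :
    ⁅J.baseChange A x, J.baseChange A y⁆ = ⁅x, y⁆ := by
  induction x using TensorProduct.induction_on with
  | zero => simp
  | add x x' hx hx' => simp only [map_add, add_lie, hx, hx']
  | tmul a u =>
    induction y using TensorProduct.induction_on with
    | zero => simp
    | add y y' hy hy' => simp only [map_add, lie_add, hy, hy']
    | tmul b v => simp only [baseChange_tmul, LieAlgebra.ExtendScalars.bracket_tmul, hJ]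

theorem Module.End.lie_eq_zero_of_mem_eigenspace {K L : Type*} [Field K] [LieRing L]
    [LieAlgebra K L] (J : Module.End K L) (hJ : ∀ x y : L, ⁅J x, J y⁆ = ⁅x, y⁆) {c : K}
    (hc : c * c ≠ 1) {x y : L} (hx : x ∈ J.eigenspace c) (hy : y ∈ J.eigenspace c) :
    ⁅x, y⁆ = 0 := by
  have h := hJ x y
  rw [mem_eigenspace_iff.mp hx, mem_eigenspace_iff.mp hy, smul_lie, lie_smul, smul_smul] at h
  have : (c * c - 1) • ⁅x, y⁆ = 0 := by rw [sub_smul, h, one_smul, sub_self]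
  exact (smul_eq_zero.mp this).resolve_left (sub_ne_zero.mpr hc)

section AbelianSemidirect

variable {R A M : Type*} [CommRing R] [AddCommGroup A] [Module R A] [AddCommGroup M] [Module R M]
  (ρ : A →ₗ[R] Module.End R M)

/-- The semidirect product of `A`, viewed as an abelian Lie algebra, with the `A`-module `M`
given by the commuting family `ρ`. -/
abbrev abelianSemidirectLieRing (hρ : ∀ a b, Commute (ρ a) (ρ b)) : LieRing (A × M) where
  bracket p q := (0, ρ p.1 q.2 - ρ q.1 p.2)
  add_lie p q r := by
    ext <;> simp only [Prod.fst_add, Prod.snd_add, map_add, LinearMap.add_apply, Prod.mk_add_mk,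
      add_zero]
    abel
  lie_add p q r := by
    ext <;> simp only [Prod.fst_add, Prod.snd_add, map_add, LinearMap.add_apply, Prod.mk_add_mk,
      add_zero]
    abel
  lie_self p := by ext <;> simp
  leibniz_lie p q r := by
    ext
    · simp
    · simp [← Module.End.mul_apply, (hρ _ _).eq]

theorem abelianSemidirect_lie (hρ : ∀ a b, Commute (ρ a) (ρ b)) (p q : A × M) :
    letI := abelianSemidirectLieRing ρ hρ
    ⁅p, q⁆ = (0, ρ p.1 q.2 - ρ q.1 p.2) :=
  rfl

abbrev abelianSemidirectLieAlgebra (hρ : ∀ a b, Commute (ρ a) (ρ b)) :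
    letI := abelianSemidirectLieRing ρ hρ
    LieAlgebra R (A × M) :=
  letI := abelianSemidirectLieRing ρ hρ
  { lie_smul c p q := by ext <;> simp [abelianSemidirect_lie, smul_sub] }

end AbelianSemidirect

namespace Submodule

variable {R L : Type*} [CommRing R] [LieRing L] [LieAlgebra R L] (W : Submodule R L)

theorem lie_mem_dualAnnihilator (hW : ∀ x ∈ W, ∀ y ∈ W, ⁅x, y⁆ = 0) {x : L} (hx : x ∈ W)
    (f : Module.Dual R L) : ⁅x, f⁆ ∈ W.dualAnnihilator :=
  (mem_dualAnnihilator _).mpr fun y hy => by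
    rw [Module.Dual.lie_apply, hW x hx y hy, map_zero, neg_zero]

def coadjointDualAnnihilator (hW : ∀ x ∈ W, ∀ y ∈ W, ⁅x, y⁆ = 0) :
    W →ₗ[R] Module.End R W.dualAnnihilator where
  toFun x :=
    { toFun f := ⟨⁅(x : L), (f : Module.Dual R L)⁆, W.lie_mem_dualAnnihilator hW x.2 f⟩
      map_add' _ _ := Subtype.ext (lie_add _ _ _)
      map_smul' _ _ := Subtype.ext (lie_smul _ _ _) }
  map_add' _ _ := LinearMap.ext fun _ => Subtype.ext (add_lie _ _ _)
  map_smul' _ _ := LinearMap.ext fun _ => Subtype.ext (smul_lie _ _ _)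

theorem coadjointDualAnnihilator_apply (hW : ∀ x ∈ W, ∀ y ∈ W, ⁅x, y⁆ = 0) (x : W)
    (f : W.dualAnnihilator) :
    (W.coadjointDualAnnihilator hW x f : Module.Dual R L) = ⁅(x : L), (f : Module.Dual R L)⁆ :=
  rfl

theorem commute_coadjointDualAnnihilator (hW : ∀ x ∈ W, ∀ y ∈ W, ⁅x, y⁆ = 0) (x y : W) :
    Commute (W.coadjointDualAnnihilator hW x) (W.coadjointDualAnnihilator hW y) := by
  ext f : 2
  simp only [Module.End.mul_apply, coadjointDualAnnihilator_apply]
  rw [leibniz_lie, hW x x.2 y y.2, zero_lie, zero_add]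

end Submodule

/-- `(g^{0,1})*` is realised as the annihilator of `g^{1,0}` inside the dual of `g_ℂ`, and the
cross bracket `{V, ω̄} = ι_V dω̄` as `Z ↦ -ω̄ ⁅V, Z⁆`. -/
theorem lie_algebra_structure_on_sum_general
    {g : Type*} [LieRing g] [LieAlgebra ℝ g]
    (J : g →ₗ[ℝ] g)
    (hab : ∀ A B : g, ⁅J A, J B⁆ = ⁅A, B⁆)
    (g10 : Submodule ℂ (ℂ ⊗[ℝ] g))
    (hg10 : g10 = Module.End.eigenspace
      ((J.baseChange ℂ : (ℂ ⊗[ℝ] g) →ₗ[ℂ] (ℂ ⊗[ℝ] g)) :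
        Module.End ℂ (ℂ ⊗[ℝ] g)) Complex.I) :
    ∃ (_i : LieRing (g10 × g10.dualAnnihilator))
      (_j : LieAlgebra ℂ (g10 × g10.dualAnnihilator)),
      ∀ (V V' : g10) (ω ω' : g10.dualAnnihilator),
        ((⁅((V, ω) : g10 × g10.dualAnnihilator), ((V', ω') : g10 × g10.dualAnnihilator)⁆).1 : ℂ ⊗[ℝ] g) = 0 ∧
        ∀ Z : ℂ ⊗[ℝ] g,
          ((⁅((V, ω) : g10 × g10.dualAnnihilator), ((V', ω') : g10 × g10.dualAnnihilator)⁆).2 :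
              Module.Dual ℂ (ℂ ⊗[ℝ] g)) Z
            = -(ω' : Module.Dual ℂ (ℂ ⊗[ℝ] g)) ⁅(V : ℂ ⊗[ℝ] g), Z⁆
              + (ω : Module.Dual ℂ (ℂ ⊗[ℝ] g)) ⁅(V' : ℂ ⊗[ℝ] g), Z⁆ := by
  have hg10_abelian : ∀ x ∈ g10, ∀ y ∈ g10, ⁅x, y⁆ = 0 := by
    subst hg10
    exact fun x hx y hy => Module.End.lie_eq_zero_of_mem_eigenspace (J.baseChange ℂ)
      (J.baseChange_lie_baseChange hab) (by norm_num) hx hy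
  have hρ := g10.commute_coadjointDualAnnihilator hg10_abelian
  refine ⟨abelianSemidirectLieRing _ hρ, abelianSemidirectLieAlgebra _ hρ,
    fun V V' ω ω' => ⟨rfl, fun Z => ?_⟩⟩
  simp [abelianSemidirect_lie, Submodule.coadjointDualAnnihilator_apply]

/-- For an abelian complex structure `J` on `g`, the direct sum
`g^{1,0} ⊕ (g^{0,1})*` carries a Lie algebra structure where
`{g^{1,0}, g^{1,0}} = 0`, `{(g^{0,1})*, (g^{0,1})*} = 0` and the cross bracket
is `{V, ω̄} = ι_V dω̄`, i.e. `(Z ↦ -ω̄ ⁅V, Z⁆)`.  Here `(g^{0,1})*` is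
realised as the annihilator of `g^{1,0}` inside the dual of `g_ℂ`. -/
theorem lie_algebra_structure_on_sum
    {g : Type*} [LieRing g] [LieAlgebra ℝ g] [FiniteDimensional ℝ g]
    (J : g →ₗ[ℝ] g) (hJ2 : ∀ X : g, J (J X) = -X)
    (hab : ∀ A B : g, ⁅J A, J B⁆ = ⁅A, B⁆)
    (g10 : Submodule ℂ (ℂ ⊗[ℝ] g))
    (hg10 : g10 = Module.End.eigenspace
      ((J.baseChange ℂ : (ℂ ⊗[ℝ] g) →ₗ[ℂ] (ℂ ⊗[ℝ] g)) :
        Module.End ℂ (ℂ ⊗[ℝ] g)) Complex.I) :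
    ∃ (_i : LieRing (g10 × g10.dualAnnihilator))
      (_j : LieAlgebra ℂ (g10 × g10.dualAnnihilator)),
      ∀ (V V' : g10) (ω ω' : g10.dualAnnihilator),
        ((⁅((V, ω) : g10 × g10.dualAnnihilator), ((V', ω') : g10 × g10.dualAnnihilator)⁆).1 : ℂ ⊗[ℝ] g) = 0 ∧
        ∀ Z : ℂ ⊗[ℝ] g,
          ((⁅((V, ω) : g10 × g10.dualAnnihilator), ((V', ω') : g10 × g10.dualAnnihilator)⁆).2 :
              Module.Dual ℂ (ℂ ⊗[ℝ] g)) Z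
            = -(ω' : Module.Dual ℂ (ℂ ⊗[ℝ] g)) ⁅(V : ℂ ⊗[ℝ] g), Z⁆
              + (ω : Module.Dual ℂ (ℂ ⊗[ℝ] g)) ⁅(V' : ℂ ⊗[ℝ] g), Z⁆ :=
  lie_algebra_structure_on_sum_general J hab g10 hg10
end
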